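/- Let ε ∈ (0,1), t ∈ ℝ, and x ∈ ℝⁿ with x ≠ 0 and ‖x‖ ≠ √(1−ε)·t. Define t* = (‖x‖² − (1−ε)·t²) / (2·√(1−ε)·(‖x‖ − √(1−ε)·t)), the point r = (t*, √(1−ε)·t*·x/‖x‖) ∈ ℝ^{1+n}, and q = (t, x) ∈ ℝ^{1+n}. Then both segments from the origin to r and from r to q are η_ε-null, i.e., η_ε(r, r) = 0 and η_ε(q − r, q − r) = 0. -/

import Mathlib

/-- The `ε`-slim Minkowski form on `ℝ^{1+n}`, represented as `ℝ × EuclideanSpace ℝ (Fin n)`: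
`η_ε(v,w) = -(1-ε)·v₀·w₀ + ⟨v', w'⟩`. -/
noncomputable def slimMinkowski {n : ℕ} (ε : ℝ) (v w : ℝ × EuclideanSpace ℝ (Fin n)) : ℝ :=
  -((1 - ε) * (v.1 * w.1)) + (inner ℝ v.2 w.2 : ℝ)

/-!
With `s = √(1 - ε)`, the form is `η_ε(v, v) = ‖v'‖² - (s·v₀)²`, so `v` is null exactly when
`‖v'‖ = |s·v₀|`. The point `r` lies on the null ray over `x / ‖x‖`, and `t*` is chosen so that
`s·t* = (‖x‖ + s·t) / 2`: then the radial and the (rescaled) time displacement from `r` to `q`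
are `(‖x‖ - s·t) / 2` and `(s·t - ‖x‖) / 2`, equal in absolute value.
-/

theorem norm_div_norm_smul {E : Type*} [NormedAddCommGroup E] [NormedSpace ℝ E] {x : E}
    (hx : x ≠ 0) (c : ℝ) : ‖(c / ‖x‖) • x‖ = |c| := by
  rw [norm_smul, Real.norm_eq_abs, abs_div, abs_norm, div_mul_cancel₀ _ (norm_ne_zero_iff.2 hx)]

theorem mul_sq_sub_sq_div_two_mul_sub {a b s : ℝ} (hs : s ≠ 0) (hab : a ≠ b) :
    s * ((a ^ 2 - b ^ 2) / (2 * s * (a - b))) = (a + b) / 2 := by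
  have : a - b ≠ 0 := sub_ne_zero.2 hab
  field_simp
  ring

section SlimMinkowski

variable {n : ℕ} {ε s : ℝ}

theorem slimMinkowski_self_eq (hs : s ^ 2 = 1 - ε) (v : ℝ × EuclideanSpace ℝ (Fin n)) :
    slimMinkowski ε v v = ‖v.2‖ ^ 2 - (s * v.1) ^ 2 := by
  rw [slimMinkowski, real_inner_self_eq_norm_sq, ← hs]
  ring

theorem slimMinkowski_self_eq_zero_of_norm_eq (hs : s ^ 2 = 1 - ε)
    {v : ℝ × EuclideanSpace ℝ (Fin n)} (hv : ‖v.2‖ = |s * v.1|) : slimMinkowski ε v v = 0 := by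
  rw [slimMinkowski_self_eq hs, hv, sq_abs, sub_self]

end SlimMinkowski

theorem slim_null_segments_general {n : ℕ} {ε : ℝ} (hε : ε ∈ Set.Ioo (0:ℝ) 1)
    (t : ℝ) (x : EuclideanSpace ℝ (Fin n)) (hx : x ≠ 0)
    (hxt : ‖x‖ ≠ Real.sqrt (1 - ε) * t)
    (tstar : ℝ)
    (htstar : tstar = (‖x‖ ^ 2 - (1 - ε) * t ^ 2) /
      (2 * Real.sqrt (1 - ε) * (‖x‖ - Real.sqrt (1 - ε) * t)))
    (r q : ℝ × EuclideanSpace ℝ (Fin n))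
    (hr : r = (tstar, (Real.sqrt (1 - ε) * tstar / ‖x‖) • x))
    (hq : q = (t, x)) :
    slimMinkowski ε r r = 0 ∧ slimMinkowski ε (q - r) (q - r) = 0 := by
  set s := Real.sqrt (1 - ε)
  have hε' : 0 < 1 - ε := sub_pos.2 hε.2
  have hs : s ^ 2 = 1 - ε := Real.sq_sqrt hε'.le
  have hst : s * tstar = (‖x‖ + s * t) / 2 := by
    rw [htstar, ← hs, ← mul_pow]
    exact mul_sq_sub_sq_div_two_mul_sub (Real.sqrt_pos.2 hε').ne' hxt
  have hqr : q - r = (t - tstar, ((‖x‖ - s * tstar) / ‖x‖) • x) := by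
    rw [hq, hr, Prod.mk_sub_mk, sub_div, div_self (norm_ne_zero_iff.2 hx), sub_smul, one_smul]
  refine ⟨slimMinkowski_self_eq_zero_of_norm_eq hs ?_, slimMinkowski_self_eq_zero_of_norm_eq hs ?_⟩
  · rw [hr, norm_div_norm_smul hx]
  · rw [hqr, norm_div_norm_smul hx, ← abs_neg]
    congr 1
    linear_combination 2 * hst

/-- For `ε ∈ (0,1)`, `t ∈ ℝ`, `x ∈ ℝⁿ` with `x ≠ 0` and `‖x‖ ≠ √(1-ε)·t`, setting
`t* = (‖x‖² − (1−ε)t²)/(2√(1−ε)(‖x‖ − √(1−ε) t))`, `r = (t*, √(1−ε)·t*·x/‖x‖)` and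
`q = (t, x)`, both segments from the origin to `r` and from `r` to `q` are `η_ε`-null:
`η_ε(r,r) = 0` and `η_ε(q−r, q−r) = 0`. -/
theorem slim_null_segments {n : ℕ} (hn : 1 ≤ n) {ε : ℝ} (hε : ε ∈ Set.Ioo (0:ℝ) 1)
    (t : ℝ) (x : EuclideanSpace ℝ (Fin n)) (hx : x ≠ 0)
    (hxt : ‖x‖ ≠ Real.sqrt (1 - ε) * t)
    (tstar : ℝ)
    (htstar : tstar = (‖x‖ ^ 2 - (1 - ε) * t ^ 2) /
      (2 * Real.sqrt (1 - ε) * (‖x‖ - Real.sqrt (1 - ε) * t)))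
    (r q : ℝ × EuclideanSpace ℝ (Fin n))
    (hr : r = (tstar, (Real.sqrt (1 - ε) * tstar / ‖x‖) • x))
    (hq : q = (t, x)) :
    slimMinkowski ε r r = 0 ∧ slimMinkowski ε (q - r) (q - r) = 0 :=
  slim_null_segments_general hε t x hx hxt tstar htstar r q hr hq
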